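/- arXiv:1511.03568 — 2 statements merged into one kernel-verified Lean document; each statement's English description precedes it below -/
import Mathlib

section
/- Let G be a strongly connected digraph and let x, y be chip-distributions on G with x ∼ y (linearly equivalent). Then x is terminating if and only if y is terminating. -/
open Finset

variable {V : Type} [Fintype V] [DecidableEq V]

/-- The outdegree of a vertex `v` in the multidigraph with multiplicity function `m`
(`m u v` is the number of directed edges from `u` to `v`). -/
def outdeg (m : V → V → ℕ) (v : V) : ℤ := ∑ u, (m v u : ℤ)

/-- The indegree of a vertex. -/
def indeg (m : V → V → ℕ) (v : V) : ℤ := ∑ u, (m u v : ℤ)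

/-- The digraph is loopless. -/
def Loopless (m : V → V → ℕ) : Prop := ∀ v, m v v = 0

/-- The digraph is strongly connected: every vertex reaches every vertex on a directed path. -/
def StronglyConnected (m : V → V → ℕ) : Prop :=
  ∀ u v : V, Relation.ReflTransGen (fun a b => 0 < m a b) u v

/-- Firing vertex `v` in chip-distribution `x`: `v` sends a chip along each outgoing edge. -/
def fire (m : V → V → ℕ) (x : V → ℤ) (v : V) : V → ℤ :=
  fun u => x u + (m v u : ℤ) - (if u = v then outdeg m v else 0)

/-- The degree (total number of chips) of a chip-distribution / divisor. -/
def degSum (x : V → ℤ) : ℤ := ∑ v, x v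

/-- The state of the chip-firing game after `n` steps, starting from `x` and
firing the vertices `s 0, s 1, …` in this order. -/
def gameState (m : V → V → ℕ) (x : V → ℤ) (s : ℕ → V) : ℕ → (V → ℤ)
  | 0 => x
  | n + 1 => fire m (gameState m x s n) (s n)

/-- `s` encodes an infinite legal chip-firing game starting from `x`:
at each step the fired vertex is active. -/
def InfGame (m : V → V → ℕ) (x : V → ℤ) (s : ℕ → V) : Prop :=
  ∀ n, outdeg m (s n) ≤ gameState m x s n (s n)

/-- A chip-distribution is terminating if no infinite legal game starts from it. -/
def Terminating (m : V → V → ℕ) (x : V → ℤ) : Prop :=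
  ¬ ∃ s : ℕ → V, InfGame m x s

/-- The Laplacian of the digraph applied to `z`. -/
def lap (m : V → V → ℕ) (z : V → ℤ) : V → ℤ :=
  fun u => (∑ v, (m v u : ℤ) * z v) - outdeg m u * z u

/-- Linear equivalence: `x ∼ y` iff `x = y + L z` for some integer vector `z`. -/
def LinEquiv (m : V → V → ℕ) (x y : V → ℤ) : Prop :=
  ∃ z : V → ℤ, x = y + lap m z

/-!
In an infinite legal game the chip count of each vertex is bounded below, hence (chips being
conserved) also above. A vertex that eventually stops firing would therefore contradict an
in-neighbour firing infinitely often, so by strong connectivity every vertex fires infinitely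
often. This lets an illegal firing of a vertex be absorbed into an infinite game, so
non-termination is preserved under `x ↦ x + L z` for `z ≥ 0`. Finally `det L = 0`, and a cut
argument shows that a kernel vector of `L` with one positive entry is positive everywhere;
adding a multiple of such a vector makes any `z` nonnegative without changing `L z`.
-/

open Matrix Filter

section Laplacian

variable (m : V → V → ℕ)

def lapMatrix : Matrix V V ℤ :=
  Matrix.of fun u v => (m v u : ℤ) - if u = v then outdeg m u else 0

lemma lapMatrix_mulVec (z : V → ℤ) : lapMatrix m *ᵥ z = lap m z := by
  ext u
  simp [lapMatrix, lap, mulVec, dotProduct, sub_mul, sum_sub_distrib]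

lemma lap_add (a b : V → ℤ) : lap m (a + b) = lap m a + lap m b := by
  simp only [← lapMatrix_mulVec, mulVec_add]

lemma lap_zero : lap m 0 = 0 := by
  simp only [← lapMatrix_mulVec, mulVec_zero]

lemma lap_neg (a : V → ℤ) : lap m (-a) = -lap m a := by
  simp only [← lapMatrix_mulVec, mulVec_neg]

lemma lap_smul (k : ℤ) (a : V → ℤ) : lap m (k • a) = k • lap m a := by
  simp only [← lapMatrix_mulVec, mulVec_smul]

lemma one_vecMul_lapMatrix : 1 ᵥ* lapMatrix m = 0 := by
  ext v
  simp [lapMatrix, vecMul, dotProduct, sum_sub_distrib, outdeg]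

lemma sum_lap (z : V → ℤ) : ∑ u, lap m z u = 0 := by
  rw [← one_dotProduct, ← lapMatrix_mulVec, dotProduct_mulVec, one_vecMul_lapMatrix,
    zero_dotProduct]

lemma det_lapMatrix [Nonempty V] : (lapMatrix m).det = 0 :=
  exists_vecMul_eq_zero_iff.1 ⟨1, one_ne_zero, one_vecMul_lapMatrix m⟩

lemma fire_eq_add_lap_single (x : V → ℤ) (v : V) :
    fire m x v = x + lap m (Pi.single v 1) := by
  rw [← lapMatrix_mulVec, mulVec_single_one]
  ext u
  by_cases h : u = v <;> simp [fire, lapMatrix, add_sub_assoc, h]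

lemma degSum_fire (x : V → ℤ) (v : V) : degSum (fire m x v) = degSum x := by
  simp [degSum, fire_eq_add_lap_single, sum_add_distrib, sum_lap]

end Laplacian

lemma StronglyConnected.forall_of_closed {α : Type} {m : α → α → ℕ} (hconn : StronglyConnected m)
    {P : α → Prop} (hP : ∀ u v, 0 < m u v → P u → P v) {a : α} (ha : P a) (b : α) : P b := by
  induction hconn a b with
  | refl => exact ha
  | tail _ huv ih => exact hP _ _ huv ih

section PeriodVector

variable (m : V → V → ℕ)

lemma sum_lap_eq_inflow_sub_outflow (S : Finset V) (z : V → ℤ) :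
    ∑ u ∈ S, lap m z u
      = ∑ v ∈ Sᶜ, ∑ u ∈ S, (m v u : ℤ) * z v - ∑ v ∈ S, ∑ u ∈ Sᶜ, (m v u : ℤ) * z v := by
  have hin : ∑ u ∈ S, ∑ v, (m v u : ℤ) * z v
      = ∑ v ∈ S, ∑ u ∈ S, (m v u : ℤ) * z v + ∑ v ∈ Sᶜ, ∑ u ∈ S, (m v u : ℤ) * z v := by
    rw [sum_comm, sum_add_sum_compl]
  have hout : ∑ u ∈ S, outdeg m u * z u
      = ∑ v ∈ S, ∑ u ∈ S, (m v u : ℤ) * z v + ∑ v ∈ S, ∑ u ∈ Sᶜ, (m v u : ℤ) * z v := by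
    simp only [outdeg, sum_mul, ← sum_add_distrib, sum_add_sum_compl]
  rw [← sub_eq_zero]
  simp only [lap, sum_sub_distrib, hin, hout]
  ring

lemma pos_of_lap_eq_zero (hconn : StronglyConnected m) {q : V → ℤ} (hq : lap m q = 0)
    {a : V} (ha : 0 < q a) (b : V) : 0 < q b := by
  set S := univ.filter (0 < q ·)
  refine hconn.forall_of_closed (P := (0 < q ·)) (fun v u hvu hv => ?_) ha b
  by_contra hu
  have hvS : v ∈ S := by simpa [S] using hv
  have huS : u ∈ Sᶜ := by simpa [S] using hu
  have hin : ∑ w ∈ Sᶜ, ∑ u ∈ S, (m w u : ℤ) * q w ≤ 0 :=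
    sum_nonpos fun w hw => sum_nonpos fun _ _ =>
      mul_nonpos_of_nonneg_of_nonpos (by positivity) (by simpa [S] using hw)
  have hout : (m v u : ℤ) * q v ≤ ∑ w ∈ S, ∑ u ∈ Sᶜ, (m w u : ℤ) * q w := by
    have hnonneg : ∀ w ∈ S, ∀ u, 0 ≤ (m w u : ℤ) * q w := fun w hw _ =>
      mul_nonneg (by positivity) (mem_filter.1 hw).2.le
    refine (single_le_sum (f := fun u => (m v u : ℤ) * q v)
      (fun u _ => hnonneg v hvS u) huS).trans ?_
    exact single_le_sum (fun w hw => sum_nonneg fun u _ => hnonneg w hw u) hvS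
  have hflux := sum_lap_eq_inflow_sub_outflow m S q
  simp only [hq, Pi.zero_apply, sum_const_zero] at hflux
  have : 0 < (m v u : ℤ) * q v := by positivity
  linarith

lemma exists_pos_lap_eq_zero [Nonempty V] (hconn : StronglyConnected m) :
    ∃ p : V → ℤ, (∀ v, 0 < p v) ∧ lap m p = 0 := by
  obtain ⟨q, hq0, hq⟩ := exists_mulVec_eq_zero_iff.2 (det_lapMatrix m)
  rw [lapMatrix_mulVec] at hq
  obtain ⟨a, ha⟩ := Function.ne_iff.1 hq0
  rcases ha.lt_or_gt with ha | ha
  · have hq' : lap m (-q) = 0 := by rw [lap_neg, hq, neg_zero]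
    exact ⟨-q, pos_of_lap_eq_zero m hconn hq' (neg_pos.2 ha), hq'⟩
  · exact ⟨q, pos_of_lap_eq_zero m hconn hq ha, hq⟩

end PeriodVector

section GameState

variable (m : V → V → ℕ) (x : V → ℤ) (s : ℕ → V)

lemma fire_comm (u v : V) :
    fire m (fire m x u) v = fire m (fire m x v) u := by
  simp only [fire_eq_add_lap_single, add_right_comm]

lemma gameState_fire (v : V) (n : ℕ) :
    gameState m (fire m x v) s n = fire m (gameState m x s n) v := by
  induction n with
  | zero => rfl
  | succ n ih => rw [gameState, gameState, ih, fire_comm]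

lemma gameState_add (j n : ℕ) :
    gameState m (gameState m x s j) (fun k => s (j + k)) n = gameState m x s (j + n) := by
  induction n with
  | zero => rfl
  | succ n ih => rw [gameState, ih]; rfl

lemma degSum_gameState (n : ℕ) : degSum (gameState m x s n) = degSum x := by
  induction n with
  | zero => rfl
  | succ n ih => rw [gameState, degSum_fire, ih]

end GameState

section Games

variable {m : V → V → ℕ} {x : V → ℤ} {s : ℕ → V}

lemma gameState_congr {t : ℕ → V} {n : ℕ} (h : ∀ i < n, s i = t i) :
    gameState m x s n = gameState m x t n := by
  induction n with
  | zero => rfl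
  | succ n ih => rw [gameState, gameState, ih fun i hi => h i (by omega), h n (by omega)]

lemma InfGame.shift (hs : InfGame m x s) (j : ℕ) :
    InfGame m (gameState m x s j) (fun k => s (j + k)) := fun n => by
  rw [gameState_add]
  exact hs (j + n)

/-- A vertex holds at least `0` chips right after it fires and only gains chips otherwise. -/
lemma InfGame.min_le_gameState (hs : InfGame m x s) (n : ℕ) (u : V) :
    min (x u) 0 ≤ gameState m x s n u := by
  induction n with
  | zero => exact min_le_left _ _
  | succ n ih =>
    rw [gameState]
    by_cases hu : u = s n
    · subst hu
      have := hs n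
      simp only [fire, if_true]
      linarith [min_le_right (x (s n)) 0, (m (s n) (s n)).cast_nonneg (α := ℤ)]
    · simp only [fire, hu, if_false, sub_zero]
      linarith [(m (s n) u).cast_nonneg (α := ℤ)]

lemma InfGame.gameState_le (hs : InfGame m x s) (n : ℕ) (u : V) :
    gameState m x s n u ≤ degSum x - ∑ w ∈ univ.erase u, min (x w) 0 := by
  have hsum := degSum_gameState m x s n
  rw [degSum, ← add_sum_erase _ _ (mem_univ u)] at hsum
  have := sum_le_sum fun w (_ : w ∈ univ.erase u) => hs.min_le_gameState n w
  linarith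

lemma exists_le_gameState_of_frequently {c d : V} (hc : ∃ᶠ n in atTop, s n = c)
    (hcd : 0 < m c d) (hd : ∀ n, s n ≠ d) (K : ℕ) : ∃ n, x d + K ≤ gameState m x s n d := by
  have hstep : ∀ n, gameState m x s (n + 1) d = gameState m x s n d + m (s n) d := fun n => by
    simp [gameState, fire, (hd n).symm]
  have hmono : Monotone fun n => gameState m x s n d :=
    monotone_nat_of_le_succ fun n => by simp only [hstep]; omega
  induction K with
  | zero => exact ⟨0, by simp [gameState]⟩
  | succ K ih =>
    obtain ⟨n, hn⟩ := ih
    obtain ⟨n', hnn', hn'c⟩ := frequently_atTop.1 hc n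
    refine ⟨n' + 1, ?_⟩
    rw [hstep, hn'c]
    have : gameState m x s n d ≤ gameState m x s n' d := hmono hnn'
    push_cast
    omega

lemma InfGame.frequently_of_edge (hs : InfGame m x s) {c d : V} (hc : ∃ᶠ n in atTop, s n = c)
    (hcd : 0 < m c d) : ∃ᶠ n in atTop, s n = d := by
  by_contra h
  obtain ⟨j, hj⟩ := eventually_atTop.1 (not_frequently.1 h)
  have hc' : ∃ᶠ k in atTop, s (j + k) = c := frequently_atTop.2 fun a => by
    obtain ⟨b, hb, hbc⟩ := frequently_atTop.1 hc (j + a)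
    exact ⟨b - j, by omega, by rwa [Nat.add_sub_cancel' (by omega)]⟩
  set x' := gameState m x s j
  set B := degSum x' - ∑ w ∈ univ.erase d, min (x' w) 0
  obtain ⟨n, hn⟩ := exists_le_gameState_of_frequently (x := x') hc' hcd
    (fun k => hj (j + k) (Nat.le_add_right j k)) (B - x' d + 1).toNat
  have : gameState m x' (fun k => s (j + k)) n d ≤ B := (hs.shift j).gameState_le n d
  omega

lemma InfGame.frequently (hconn : StronglyConnected m) (hs : InfGame m x s) (v : V) :
    ∃ᶠ n in atTop, s n = v := by
  obtain ⟨w, hw⟩ : ∃ w, ∃ᶠ n in atTop, s n = w := by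
    by_contra! h
    obtain ⟨n, hn⟩ := (eventually_all.2 h).exists
    exact hn (s n) rfl
  exact hconn.forall_of_closed (fun c d hcd hc => hs.frequently_of_edge hc hcd) hw v

/-- Firing `v` illegally keeps the game infinite: replay `s`, skipping its first firing of `v`. -/
lemma InfGame.exists_infGame_fire (hs : InfGame m x s) {v : V} (hv : ∃ j, s j = v) :
    ∃ t, InfGame m (fire m x v) t := by
  set j := Nat.find hv
  set t : ℕ → V := fun k => if k < j then s k else s (k + 1)
  have hbefore : ∀ k ≤ j, gameState m (fire m x v) t k = fire m (gameState m x s k) v :=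
    fun k hk => by
      rw [gameState_fire, gameState_congr (s := t) (t := s) fun i hi => if_pos (by omega)]
  have hafter : ∀ k, gameState m (fire m x v) t (j + k) = gameState m x s (j + 1 + k) := by
    intro k
    have hj : gameState m (fire m x v) t j = gameState m x s (j + 1) := by
      rw [hbefore j le_rfl, gameState, Nat.find_spec hv]
    have ht : (fun k => t (j + k)) = fun k => s (j + 1 + k) := by
      funext k
      simp only [t, if_neg (Nat.not_lt.2 (Nat.le_add_right j k)), Nat.add_right_comm]
    rw [← gameState_add, hj, ht, gameState_add]
  refine ⟨t, fun k => ?_⟩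
  rcases lt_or_ge k j with hk | hk
  · have hne : s k ≠ v := Nat.find_min hv hk
    simp only [t, if_pos hk]
    rw [hbefore k hk.le]
    simp only [fire, hne, if_false, sub_zero]
    linarith [hs k, (m v (s k)).cast_nonneg (α := ℤ)]
  · obtain ⟨i, rfl⟩ := Nat.exists_eq_add_of_le hk
    simp only [t, if_neg (Nat.not_lt.2 hk)]
    rw [hafter, Nat.add_right_comm]
    exact hs (j + 1 + i)

lemma InfGame.exists_infGame_add_lap (hconn : StronglyConnected m) (hs : InfGame m x s)
    {z : V → ℤ} (hz : 0 ≤ z) : ∃ t, InfGame m (x + lap m z) t := by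
  obtain ⟨n, hn⟩ : ∃ n : ℕ, ∑ v, z v = n :=
    ⟨(∑ v, z v).toNat, (Int.toNat_of_nonneg (sum_nonneg fun v _ => hz v)).symm⟩
  induction n generalizing z with
  | zero =>
    have hz0 : z = 0 := funext fun v =>
      (sum_eq_zero_iff_of_nonneg fun v _ => hz v).1 (by simpa using hn) v (mem_univ v)
    rw [hz0, lap_zero, add_zero]
    exact ⟨s, hs⟩
  | succ n ih =>
    obtain ⟨v, hv⟩ : ∃ v, 0 < z v := by
      by_contra! h
      have : ∑ v, z v ≤ 0 := sum_nonpos fun v _ => h v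
      omega
    have hz' : 0 ≤ z - Pi.single v 1 := by
      intro u
      by_cases hu : u = v
      · subst hu
        simp only [Pi.zero_apply, Pi.sub_apply, Pi.single_eq_same, Int.sub_nonneg]
        omega
      · simpa [hu] using hz u
    have hn' : ∑ u, (z - Pi.single v 1 : V → ℤ) u = n := by
      simp [sum_sub_distrib, hn]
    obtain ⟨t, ht⟩ := ih hz' hn'
    have hfire : x + lap m z = fire m (x + lap m (z - Pi.single v 1)) v := by
      rw [fire_eq_add_lap_single, add_assoc, ← lap_add, sub_add_cancel]
    rw [hfire]
    exact ht.exists_infGame_fire (ht.frequently hconn v).exists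

lemma LinEquiv.symm {x y : V → ℤ} (h : LinEquiv m x y) : LinEquiv m y x := by
  obtain ⟨z, rfl⟩ := h
  exact ⟨-z, by rw [lap_neg]; abel⟩

lemma exists_infGame_of_linEquiv (hconn : StronglyConnected m) {x y : V → ℤ}
    (hxy : LinEquiv m x y) : (∃ s, InfGame m y s) → ∃ s, InfGame m x s := by
  rintro ⟨s, hs⟩
  obtain ⟨z, rfl⟩ := hxy
  have : Nonempty V := ⟨s 0⟩
  obtain ⟨p, hp, hlp⟩ := exists_pos_lap_eq_zero m hconn
  set k := ∑ v, |z v|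
  have hz : 0 ≤ z + k • p := fun v => by
    have hzk : |z v| ≤ k := single_le_sum (fun w _ => abs_nonneg (z w)) (mem_univ v)
    have hkp : k ≤ k * p v := le_mul_of_one_le_right (hzk.trans' (abs_nonneg _)) (hp v)
    simp only [Pi.zero_apply, Pi.add_apply, Pi.smul_apply, smul_eq_mul]
    linarith [neg_abs_le (z v)]
  have hlap : lap m (z + k • p) = lap m z := by rw [lap_add, lap_smul, hlp, smul_zero, add_zero]
  rw [← hlap]
  exact hs.exists_infGame_add_lap hconn hz

end Games

theorem terminating_iff_of_linEquiv_general
    {V : Type} [Fintype V] [DecidableEq V]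
    (m : V → V → ℕ) (hconn : StronglyConnected m)
    (x y : V → ℤ) (hxy : LinEquiv m x y) :
    Terminating m x ↔ Terminating m y :=
  ⟨mt (exists_infGame_of_linEquiv hconn hxy), mt (exists_infGame_of_linEquiv hconn hxy.symm)⟩

/-- Linearly equivalent chip-distributions on a strongly connected digraph are
simultaneously terminating. -/
theorem terminating_iff_of_linEquiv
    {V : Type} [Fintype V] [DecidableEq V] [Nonempty V]
    (m : V → V → ℕ) (hloop : Loopless m) (hconn : StronglyConnected m)
    (x y : V → ℤ) (hxy : LinEquiv m x y) :
    Terminating m x ↔ Terminating m y :=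
  terminating_iff_of_linEquiv_general m hconn x y hxy
end

section
/- Let G be an undirected graph (a finite connected loopless multigraph) and let d be its degree vector. Then for every chip-distribution x on G, dist(x) − dist(d − x) = m(G) − deg(x), where m(G) is the number of undirected edges of G. -/
open Finset

variable {V : Type} [Fintype V] [DecidableEq V]

/-- The distance of `x` from the non-terminating distributions:
the minimum degree of a nonnegative `y` such that `x + y` is non-terminating. -/
noncomputable def chipDist (m : V → V → ℕ) (x : V → ℤ) : ℕ :=
  sInf {n : ℕ | ∃ y : V → ℤ, 0 ≤ y ∧ degSum y = (n : ℤ) ∧ ¬ Terminating m (x + y)}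

/-!
A distribution `x` is non-terminating exactly when it is linearly equivalent to a distribution
dominating the indegree vector `c_f` of an acyclic orientation. Such a distribution always has
an active vertex, and firing it keeps it in the same linear equivalence class, which gives one
direction. Conversely an infinite legal game revisits a state; over one period the Laplacian
kills the firing vector, so by connectivity every vertex fires equally often, and ordering the
vertices by their last firing in the period yields the orientation.

Reversing the orientation gives `c_f + c_{-f} = d` and `deg c_f = m(G)`. If `y ≥ 0` is optimal
for `dist(x)` and `c_f ≤ x + y + L z`, then `F = x + y + L z - c_f ≥ 0` witnesses
`dist(d - x) ≤ dist(x) + deg(x) - m(G)`; applying this to `d - x` as well gives equality.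
-/

namespace ChipFiring

variable {m : V → V → ℕ}

section Laplacian

omit [DecidableEq V] in
lemma lap_add (a b : V → ℤ) : lap m (a + b) = lap m a + lap m b := by
  funext u
  simp only [lap, Pi.add_apply, mul_add, sum_add_distrib]
  ring

omit [DecidableEq V] in
lemma lap_neg (z : V → ℤ) : lap m (-z) = -lap m z := by
  funext u
  simp only [lap, Pi.neg_apply, mul_neg, sum_neg_distrib]
  ring

omit [DecidableEq V] in
lemma outdeg_eq_sum (hsym : ∀ u v, m u v = m v u) (v : V) :
    outdeg m v = ∑ u, (m u v : ℤ) :=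
  sum_congr rfl fun u _ => by rw [hsym]

omit [DecidableEq V] in
lemma sum_outdeg {mG : ℕ} (hmG : 2 * mG = ∑ u, ∑ v, m u v) :
    ∑ v, outdeg m v = 2 * (mG : ℤ) := by
  simp only [outdeg]
  exact_mod_cast hmG.symm

omit [DecidableEq V] in
lemma lap_apply_eq_sum (hsym : ∀ u v, m u v = m v u) (z : V → ℤ) (v : V) :
    lap m z v = ∑ u, (m u v : ℤ) * (z u - z v) := by
  simp only [lap, outdeg_eq_sum hsym, mul_sub, sum_sub_distrib, sum_mul]

lemma fire_eq_add_lap (x : V → ℤ) (v : V) : fire m x v = x + lap m (Pi.single v 1) := by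
  funext u
  simp only [fire, lap, Pi.add_apply, Pi.single_apply, mul_ite, mul_one, mul_zero,
    sum_ite_eq', mem_univ, if_true]
  split_ifs with h <;> subst_vars <;> ring

omit [DecidableEq V] in
lemma degSum_lap (z : V → ℤ) : degSum (lap m z) = 0 := by
  simp only [degSum, lap, sum_sub_distrib]
  rw [sum_comm]
  simp [outdeg, ← sum_mul]

omit [DecidableEq V] in
lemma eq_of_lap_eq_zero (hsym : ∀ u v, m u v = m v u) (hconn : StronglyConnected m)
    {z : V → ℤ} (hz : lap m z = 0) (u v : V) : z u = z v := by
  obtain ⟨w, -, hw⟩ := exists_max_image univ z ⟨u, mem_univ u⟩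
  have hmax : ∀ a, z a ≤ z w := fun a => hw a (mem_univ a)
  have hstep : ∀ a b, z a = z w → 0 < m a b → z b = z w := by
    intro a b ha hab
    have hterms : ∀ c ∈ univ, (m c a : ℤ) * (z c - z a) ≤ 0 := fun c _ =>
      mul_nonpos_of_nonneg_of_nonpos (Nat.cast_nonneg _) (by linarith [hmax c])
    have hsum : ∑ c, (m c a : ℤ) * (z c - z a) = 0 := by
      rw [← lap_apply_eq_sum hsym, hz, Pi.zero_apply]
    have hb := (sum_eq_zero_iff_of_nonpos hterms).1 hsum b (mem_univ b)
    have hba : (m b a : ℤ) ≠ 0 := by rw [hsym]; exact_mod_cast hab.ne'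
    linarith [(mul_eq_zero.1 hb).resolve_left hba]
  have hreach : ∀ a, z a = z w := fun a => by
    induction hconn w a with
    | refl => rfl
    | tail _ hbc ih => exact hstep _ _ ih hbc
  rw [hreach u, hreach v]

end Laplacian

section Orientation

/-- Indegree of `v` in the orientation of `m` from smaller to larger values of `f`;
for injective `f` this orientation is acyclic. -/
def acyclicIndeg (m : V → V → ℕ) (f : V → ℤ) (v : V) : ℤ :=
  ∑ u, if f u < f v then (m u v : ℤ) else 0

omit [DecidableEq V] in
lemma acyclicIndeg_le_outdeg (hsym : ∀ u v, m u v = m v u) (f : V → ℤ) (v : V) :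
    acyclicIndeg m f v ≤ outdeg m v := by
  rw [outdeg_eq_sum hsym]
  exact sum_le_sum fun u _ => by split_ifs <;> simp

omit [DecidableEq V] in
lemma acyclicIndeg_add_acyclicIndeg_neg (hsym : ∀ u v, m u v = m v u) (hloop : Loopless m)
    {f : V → ℤ} (hf : Function.Injective f) (v : V) :
    acyclicIndeg m f v + acyclicIndeg m (-f) v = outdeg m v := by
  rw [outdeg_eq_sum hsym, acyclicIndeg, acyclicIndeg, ← sum_add_distrib]
  refine sum_congr rfl fun u _ => ?_
  rcases eq_or_ne u v with rfl | huv
  · simp [hloop u]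
  · rcases (hf.ne huv).lt_or_gt with h | h <;> simp [h, h.not_gt]

omit [DecidableEq V] in
lemma degSum_acyclicIndeg (hsym : ∀ u v, m u v = m v u) (hloop : Loopless m)
    {f : V → ℤ} (hf : Function.Injective f) {mG : ℕ} (hmG : 2 * mG = ∑ u, ∑ v, m u v) :
    degSum (acyclicIndeg m f) = mG := by
  have hrev : degSum (acyclicIndeg m (-f)) = degSum (acyclicIndeg m f) := by
    simp only [degSum, acyclicIndeg, Pi.neg_apply, neg_lt_neg_iff]
    rw [sum_comm]
    simp only [hsym]
  have htotal : degSum (acyclicIndeg m f) + degSum (acyclicIndeg m (-f)) = 2 * mG := by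
    rw [← sum_outdeg hmG, degSum, degSum, ← sum_add_distrib]
    exact sum_congr rfl fun v _ => acyclicIndeg_add_acyclicIndeg_neg hsym hloop hf v
  omega

def DominatesAcyclicIndeg (m : V → V → ℕ) (x : V → ℤ) : Prop :=
  ∃ f : V → ℤ, Function.Injective f ∧ ∃ z : V → ℤ, acyclicIndeg m f ≤ x + lap m z

omit [DecidableEq V] in
lemma DominatesAcyclicIndeg.add_lap {x : V → ℤ} (h : DominatesAcyclicIndeg m x)
    (z : V → ℤ) : DominatesAcyclicIndeg m (x + lap m z) := by
  obtain ⟨f, hf, z', hz'⟩ := h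
  refine ⟨f, hf, z' + -z, ?_⟩
  rwa [lap_add, lap_neg, add_add_add_comm, add_neg_cancel, add_zero]

omit [DecidableEq V] in
/-- Take `v` maximising `z`, and `f` among the maximisers of `z`: every edge into `v` then
either lowers `L z (v)` by one or is counted in `c_f (v)`. -/
lemma DominatesAcyclicIndeg.exists_outdeg_le [Nonempty V] (hsym : ∀ u v, m u v = m v u)
    (hloop : Loopless m) {w : V → ℤ} (h : DominatesAcyclicIndeg m w) :
    ∃ v, outdeg m v ≤ w v := by
  obtain ⟨f, hf, z, hz⟩ := h
  obtain ⟨v, -, hv⟩ := exists_max_image univ (fun u => toLex (z u, f u)) univ_nonempty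
  refine ⟨v, ?_⟩
  have hlap : lap m z v ≤ acyclicIndeg m f v - outdeg m v := by
    rw [lap_apply_eq_sum hsym, outdeg_eq_sum hsym, acyclicIndeg, ← sum_sub_distrib]
    refine sum_le_sum fun u _ => ?_
    rcases eq_or_ne u v with rfl | huv
    · simp [hloop u]
    have hm : (0 : ℤ) ≤ m u v := Nat.cast_nonneg _
    rcases Prod.Lex.toLex_le_toLex.1 (hv u (mem_univ u)) with hlt | ⟨heq, hle⟩
    · have := mul_le_mul_of_nonneg_left (show z u - z v ≤ -1 by omega) hm
      split_ifs <;> linarith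
    · have : f u < f v := lt_of_le_of_ne hle (hf.ne huv)
      simp only at heq
      simp [heq, this]
  linarith [hz v, show (w + lap m z) v = w v + lap m z v from rfl]

end Orientation

section Game

lemma not_terminating_of_invariant (P : (V → ℤ) → Prop)
    (hstep : ∀ w, P w → ∃ v, outdeg m v ≤ w v ∧ P (fire m w v)) {x : V → ℤ}
    (hx : P x) : ¬ Terminating m x := by
  choose next hlegal hnext using fun w : {w // P w} => hstep w.1 w.2
  let state : ℕ → {w // P w} := fun n =>
    (fun w => ⟨fire m w (next w), hnext w⟩)^[n] ⟨x, hx⟩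
  have hstate : ∀ n, gameState m x (fun n => next (state n)) n = state n := by
    intro n
    induction n with
    | zero => rfl
    | succ n ih =>
      simp only [gameState, ih, state, Function.iterate_succ_apply']
  exact not_not.2 ⟨fun n => next (state n), fun n => hstate n ▸ hlegal (state n)⟩

def firingCount (s : ℕ → V) (a b : ℕ) : V → ℤ := fun v => #{n ∈ Ico a b | s n = v}

omit [Fintype V] in
lemma firingCount_add_firingCount (s : ℕ → V) {a b c : ℕ} (hab : a ≤ b) (hbc : b ≤ c) :
    firingCount s a b + firingCount s b c = firingCount s a c := by
  funext v
  simp only [firingCount, Pi.add_apply]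
  rw [← Ico_union_Ico_eq_Ico hab hbc, filter_union, card_union_of_disjoint
    (disjoint_filter_filter (Ico_disjoint_Ico_consecutive a b c))]
  push_cast
  rfl

omit [Fintype V] in
lemma firingCount_succ_self (s : ℕ → V) (b : ℕ) :
    firingCount s b (b + 1) = Pi.single (s b) 1 := by
  funext v
  simp only [firingCount, Nat.Ico_succ_singleton, filter_singleton, Pi.single_apply, eq_comm]
  split_ifs <;> rfl

omit [Fintype V] in
lemma firingCount_mono (s : ℕ → V) (a : ℕ) {b c : ℕ} (hbc : b ≤ c) :
    firingCount s a b ≤ firingCount s a c := fun v => by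
  simp only [firingCount]
  exact_mod_cast card_le_card (filter_subset_filter _ (Ico_subset_Ico_right hbc))

lemma gameState_eq_add_lap (x : V → ℤ) (s : ℕ → V) {a b : ℕ} (hab : a ≤ b) :
    gameState m x s b = gameState m x s a + lap m (firingCount s a b) := by
  induction b, hab using Nat.le_induction with
  | base => funext v; simp [firingCount, lap]
  | succ b hab ih =>
    rw [gameState, ih, fire_eq_add_lap, ← firingCount_add_firingCount s hab b.le_succ,
      firingCount_succ_self, lap_add, add_assoc]

lemma degSum_gameState (x : V → ℤ) (s : ℕ → V) (t : ℕ) :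
    degSum (gameState m x s t) = degSum x := by
  have h := degSum_lap (m := m) (firingCount s 0 t)
  rw [gameState_eq_add_lap x s t.zero_le]
  simp only [degSum, Pi.add_apply, sum_add_distrib] at h ⊢
  rw [h, add_zero]
  rfl

lemma min_zero_le_gameState {x : V → ℤ} {s : ℕ → V} (hs : InfGame m x s) (t : ℕ) (v : V) :
    min (x v) 0 ≤ gameState m x s t v := by
  induction t generalizing v with
  | zero => exact min_le_left _ _
  | succ t ih =>
    have hm : (0 : ℤ) ≤ m (s t) v := Nat.cast_nonneg _
    simp only [gameState, fire]
    split_ifs with hv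
    · subst hv
      linarith [hs t, min_le_right (x (s t)) 0]
    · linarith [ih v]

lemma exists_gameState_eq {x : V → ℤ} {s : ℕ → V} (hs : InfGame m x s) :
    ∃ i j, i < j ∧ gameState m x s i = gameState m x s j := by
  let lo : V → ℤ := fun v => min (x v) 0
  have hlo : ∀ t, lo ≤ gameState m x s t := min_zero_le_gameState hs
  refine (Set.finite_Icc lo fun _ => degSum x - ∑ u, lo u).exists_lt_map_eq_of_forall_mem
    (f := gameState m x s) fun t => Set.mem_Icc.2 ⟨hlo t, fun v => ?_⟩
  have hv := single_le_sum (fun u _ => sub_nonneg.2 (hlo t u)) (mem_univ v)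
  rw [sum_sub_distrib, ← degSum, degSum_gameState] at hv
  linarith [min_le_right (x v) 0]

end Game

section Characterization

omit [DecidableEq V] in
lemma acyclicIndeg_le_of_outdeg_le (hsym : ∀ u v, m u v = m v u) {f w y : V → ℤ} {v : V}
    {K : ℤ} (hv : w v = K - 1) (hle : ∀ u, w u ≤ K) (hlt : ∀ u, f u < f v → w u ≤ K - 1)
    (hlegal : outdeg m v ≤ y v + lap m w v) : acyclicIndeg m f v ≤ y v := by
  have hlap : lap m w v ≤ outdeg m v - acyclicIndeg m f v := by
    rw [lap_apply_eq_sum hsym, outdeg_eq_sum hsym, acyclicIndeg, ← sum_sub_distrib]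
    refine sum_le_sum fun u _ => ?_
    have hm : (0 : ℤ) ≤ m u v := Nat.cast_nonneg _
    split_ifs with h
    · nlinarith [hlt u h]
    · nlinarith [hle u]
  linarith

omit [Fintype V] in
lemma firingCount_eq_of_last_firing (s : ℕ → V) {i t j : ℕ} (hit : i ≤ t) (htj : t < j)
    (hlast : ∀ n ∈ Ico (t + 1) j, s n ≠ s t) :
    firingCount s i t (s t) = firingCount s i j (s t) - 1 := by
  have hafter : firingCount s (t + 1) j (s t) = 0 := by
    simpa only [firingCount, Nat.cast_eq_zero, card_eq_zero, filter_eq_empty_iff] using hlast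
  rw [← firingCount_add_firingCount s (hit.trans t.le_succ) htj,
    ← firingCount_add_firingCount s hit t.le_succ]
  simp [hafter, firingCount_succ_self]

/-- Orient each edge towards the endpoint whose last firing in the period `[i, j)` comes first. -/
lemma exists_acyclicIndeg_le_of_firingCount_eq (hsym : ∀ u v, m u v = m v u) {x : V → ℤ}
    {s : ℕ → V} (hs : InfGame m x s) {i j : ℕ} (hij : i < j) {K : ℤ}
    (hK : ∀ v, firingCount s i j v = K) :
    ∃ f : V → ℤ, Function.Injective f ∧ acyclicIndeg m f ≤ gameState m x s i := by
  have hfires : ∀ v, {n ∈ Ico i j | s n = v}.Nonempty := by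
    have hpos : (0 : ℤ) < #{n ∈ Ico i j | s n = s i} := by
      exact_mod_cast card_pos.2 ⟨i, by simp [hij]⟩
    intro v
    have h := (hK v).trans (hK (s i)).symm
    rw [firingCount, firingCount] at h
    rw [← card_pos]
    omega
  let T : V → ℕ := fun v => {n ∈ Ico i j | s n = v}.max' (hfires v)
  have hT : ∀ v, (i ≤ T v ∧ T v < j) ∧ s (T v) = v := fun v =>
    by simpa only [mem_filter, mem_Ico] using max'_mem _ (hfires v)
  have hlast : ∀ v, firingCount s i (T v) v = K - 1 := by
    intro v
    have hnone : ∀ n ∈ Ico (T v + 1) j, s n ≠ s (T v) := by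
      intro n hn hsn
      rw [mem_Ico] at hn
      have hiT := (hT v).1.1
      have : n ≤ T v := le_max' _ n <| by
        simp only [mem_filter, mem_Ico, hsn, (hT v).2, and_true]
        omega
      omega
    have h := firingCount_eq_of_last_firing s (hT v).1.1 (hT v).1.2 hnone
    rwa [(hT v).2, hK] at h
  refine ⟨fun v => -(T v : ℤ), fun a b hab => ?_, fun v => ?_⟩
  · rw [← (hT a).2, ← (hT b).2, show T a = T b by simpa using hab]
  have hlegal := hs (T v)
  rw [gameState_eq_add_lap x s (hT v).1.1, (hT v).2, Pi.add_apply] at hlegal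
  refine acyclicIndeg_le_of_outdeg_le hsym (hlast v)
    (fun u => hK u ▸ firingCount_mono s i (hT v).1.2.le u)
    (fun u hu => hlast u ▸ firingCount_mono s i ?_ u) hlegal
  simp only [neg_lt_neg_iff, Nat.cast_lt] at hu
  exact hu.le

theorem not_terminating_iff [Nonempty V] (hsym : ∀ u v, m u v = m v u) (hloop : Loopless m)
    (hconn : StronglyConnected m) {x : V → ℤ} :
    ¬ Terminating m x ↔ DominatesAcyclicIndeg m x := by
  constructor
  · intro h
    obtain ⟨s, hs⟩ := not_not.1 h
    obtain ⟨i, j, hij, heq⟩ := exists_gameState_eq hs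
    have hker : lap m (firingCount s i j) = 0 := by
      have := gameState_eq_add_lap (m := m) x s hij.le
      rwa [← heq, left_eq_add] at this
    obtain ⟨f, hf, hle⟩ := exists_acyclicIndeg_le_of_firingCount_eq hsym hs hij
      fun v => eq_of_lap_eq_zero hsym hconn hker v (s i)
    exact ⟨f, hf, firingCount s 0 i, gameState_eq_add_lap x s i.zero_le ▸ hle⟩
  · refine not_terminating_of_invariant _ fun w hw => ?_
    obtain ⟨v, hv⟩ := hw.exists_outdeg_le hsym hloop
    exact ⟨v, hv, fire_eq_add_lap w v ▸ hw.add_lap _⟩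

end Characterization

section Distance

lemma chipDist_le_degSum {x y : V → ℤ} (hy : 0 ≤ y) (h : ¬ Terminating m (x + y)) :
    (chipDist m x : ℤ) ≤ degSum y := by
  have hdeg : 0 ≤ degSum y := sum_nonneg fun v _ => hy v
  have : chipDist m x ≤ (degSum y).toNat :=
    Nat.sInf_le ⟨y, hy, (Int.toNat_of_nonneg hdeg).symm, h⟩
  omega

lemma exists_degSum_eq_chipDist [Nonempty V] (hsym : ∀ u v, m u v = m v u)
    (hloop : Loopless m) (hconn : StronglyConnected m) (x : V → ℤ) :
    ∃ y, 0 ≤ y ∧ degSum y = chipDist m x ∧ ¬ Terminating m (x + y) := by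
  refine Nat.sInf_mem
    (s := {n : ℕ | ∃ y : V → ℤ, 0 ≤ y ∧ degSum y = n ∧ ¬ Terminating m (x + y)}) ?_
  let f : V → ℤ := fun v => ((Fintype.equivFin V v : ℕ) : ℤ)
  have hf : Function.Injective f :=
    Nat.cast_injective.comp (Fin.val_injective.comp (Fintype.equivFin V).injective)
  let y : V → ℤ := fun v => max (outdeg m v - x v) 0
  have hy : 0 ≤ y := fun v => le_max_right _ _
  have hnt : ¬ Terminating m (x + y) := by
    refine (not_terminating_iff hsym hloop hconn).2 ⟨f, hf, 0, fun v => ?_⟩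
    have := acyclicIndeg_le_outdeg hsym f v
    simp only [Pi.add_apply, lap, Pi.zero_apply, mul_zero, sum_const_zero, sub_zero, add_zero]
    linarith [le_max_left (outdeg m v - x v) 0]
  exact ⟨_, y, hy, (Int.toNat_of_nonneg (sum_nonneg fun v _ => hy v)).symm, hnt⟩

lemma chipDist_outdeg_sub_le [Nonempty V] (hsym : ∀ u v, m u v = m v u) (hloop : Loopless m)
    (hconn : StronglyConnected m) {mG : ℕ} (hmG : 2 * mG = ∑ u, ∑ v, m u v) (x : V → ℤ) :
    (chipDist m (fun v => outdeg m v - x v) : ℤ) ≤ chipDist m x + degSum x - mG := by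
  obtain ⟨y, hy, hydeg, hynt⟩ := exists_degSum_eq_chipDist hsym hloop hconn x
  obtain ⟨f, hf, z, hz⟩ := (not_terminating_iff hsym hloop hconn).1 hynt
  let F := x + y + lap m z - acyclicIndeg m f
  have hF : 0 ≤ F := fun v => sub_nonneg.2 (hz v)
  have hnt : ¬ Terminating m ((fun v => outdeg m v - x v) + F) := by
    refine (not_terminating_iff hsym hloop hconn).2 ⟨-f, neg_injective.comp hf, -z, fun v => ?_⟩
    have hrev := acyclicIndeg_add_acyclicIndeg_neg hsym hloop hf v
    simp only [F, lap_neg, Pi.add_apply, Pi.sub_apply, Pi.neg_apply]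
    linarith [show 0 ≤ y v from hy v]
  have hdegF : degSum F = degSum x + degSum y - mG := by
    have := degSum_lap (m := m) z
    rw [← degSum_acyclicIndeg hsym hloop hf hmG]
    simp only [F, degSum, Pi.add_apply, Pi.sub_apply, sum_add_distrib, sum_sub_distrib]
      at this ⊢
    rw [this, add_zero]
  linarith [chipDist_le_degSum hF hnt]

end Distance

end ChipFiring

/-- **Riemann–Roch theorem for graphs, chip-firing form**: for an undirected graph with
degree vector `d` and any chip-distribution `x`,
`dist(x) - dist(d - x) = m(G) - deg(x)`. -/
theorem riemann_roch_dist_form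
    {V : Type} [Fintype V] [DecidableEq V] [Nonempty V]
    (m : V → V → ℕ) (hsym : ∀ u v, m u v = m v u)
    (hloop : Loopless m) (hconn : StronglyConnected m)
    (mG : ℕ) (hmG : 2 * mG = ∑ u, ∑ v, m u v)
    (x : V → ℤ) :
    (chipDist m x : ℤ) - (chipDist m (fun v => outdeg m v - x v) : ℤ)
      = (mG : ℤ) - degSum x := by
  have hle := ChipFiring.chipDist_outdeg_sub_le hsym hloop hconn hmG x
  have hge :=
    ChipFiring.chipDist_outdeg_sub_le hsym hloop hconn hmG (fun v => outdeg m v - x v)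
  have hdeg : degSum (fun v => outdeg m v - x v) = 2 * mG - degSum x := by
    rw [degSum, sum_sub_distrib, ChipFiring.sum_outdeg hmG, degSum]
  have hx : (fun v => outdeg m v - (outdeg m v - x v)) = x := funext fun v => sub_sub_cancel _ _
  rw [hx, hdeg] at hge
  omega
end
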